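/- Let v(z) = (1-|z|^2)^β with β > 0. The weighted composition operator uC_φ: H^∞_v → H^∞_{v₁} (where v₁(z) = 1-|z|^2) is bounded if and only if sup_{z∈D} (1-|z|^2)|u(z)|/(1-|φ(z)|^2)^β < ∞, and in that case the operator norm equals this supremum (for u not identically zero). -/

import Mathlib

/-! For every `f` in the unit ball of `H^∞_{v_β}` one has pointwise
`(1-|z|²)|u(z) f(φ z)| ≤ (1-|z|²)|u(z)| / (1-|φ z|²)^β`. The bound is attained at `z` by the
normalized kernel `f_w(ζ) = (1-|w|²)^β (1 - w̄ζ)^{-2β}` with `w = φ z`, which lies in that unit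
ball because `|1 - w̄ζ|² = (1-|ζ|²)(1-|w|²) + |ζ - w|²`. Hence `uC_φ` is bounded exactly when the
ratio is, and the two suprema agree. -/

open MeasureTheory Set Filter Topology Metric

noncomputable section

def UD : Set ℂ := Metric.ball 0 1

theorem Real.le_biSup_of_bddAbove {α : Type*} {s : Set α} {k : α → ℝ} (hk : BddAbove (k '' s))
    {z : α} (hz : z ∈ s) : k z ≤ ⨆ z ∈ s, k z := by
  obtain ⟨c, hc⟩ := hk
  refine le_ciSup_of_le ⟨max c 0, ?_⟩ z (ciSup_pos (f := fun _ => k z) hz).ge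
  rintro _ ⟨x, rfl⟩
  by_cases hx : x ∈ s
  · exact (ciSup_pos hx).le.trans ((hc (mem_image_of_mem k hx)).trans (le_max_left c 0))
  · simp [hx]

theorem Real.biSup_le_of_forall_le {α : Type*} {s : Set α} {k : α → ℝ} {c : ℝ} (hc : 0 ≤ c)
    (hk : ∀ z ∈ s, k z ≤ c) : ⨆ z ∈ s, k z ≤ c :=
  Real.iSup_le (fun z => Real.iSup_le (hk z) hc) hc

theorem Real.sSup_biSup_eq_biSup {α ι : Type*} {s : Set α} {T : Set ι} {h : ι → α → ℝ}
    {g : α → ℝ} (h_nonneg : ∀ i ∈ T, ∀ z ∈ s, 0 ≤ h i z) (h_le : ∀ i ∈ T, ∀ z ∈ s, h i z ≤ g z)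
    (le_h : ∀ z ∈ s, ∃ i ∈ T, g z ≤ h i z) (hg : BddAbove (g '' s)) :
    sSup {y | ∃ i ∈ T, y = ⨆ z ∈ s, h i z} = ⨆ z ∈ s, g z := by
  have g_nonneg : ∀ z ∈ s, 0 ≤ g z := fun z hz =>
    let ⟨i, hi, _⟩ := le_h z hz; (h_nonneg i hi z hz).trans (h_le i hi z hz)
  have hsup_nonneg : 0 ≤ ⨆ z ∈ s, g z :=
    Real.iSup_nonneg fun z => Real.iSup_nonneg fun hz => g_nonneg z hz
  have biSup_h_le : ∀ i ∈ T, ⨆ z ∈ s, h i z ≤ ⨆ z ∈ s, g z := fun i hi =>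
    Real.biSup_le_of_forall_le hsup_nonneg fun z hz =>
      (h_le i hi z hz).trans (Real.le_biSup_of_bddAbove hg hz)
  have hS : BddAbove {y | ∃ i ∈ T, y = ⨆ z ∈ s, h i z} := by
    refine ⟨⨆ z ∈ s, g z, ?_⟩
    rintro _ ⟨i, hi, rfl⟩
    exact biSup_h_le i hi
  apply le_antisymm
  · refine Real.sSup_le ?_ hsup_nonneg
    rintro _ ⟨i, hi, rfl⟩
    exact biSup_h_le i hi
  · have hS_nonneg : 0 ≤ sSup {y | ∃ i ∈ T, y = ⨆ z ∈ s, h i z} := by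
      refine Real.sSup_nonneg ?_
      rintro _ ⟨i, hi, rfl⟩
      exact Real.iSup_nonneg fun z => Real.iSup_nonneg fun hz => h_nonneg i hi z hz
    refine Real.biSup_le_of_forall_le hS_nonneg fun z hz => ?_
    obtain ⟨i, hi, hgi⟩ := le_h z hz
    have hbdd : BddAbove (h i '' s) := by
      obtain ⟨c, hc⟩ := hg
      exact ⟨c, by rintro _ ⟨x, hx, rfl⟩; exact (h_le i hi x hx).trans (hc (mem_image_of_mem g hx))⟩
    calc g z ≤ h i z := hgi
      _ ≤ ⨆ z ∈ s, h i z := Real.le_biSup_of_bddAbove hbdd hz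
      _ ≤ _ := le_csSup hS ⟨i, hi, rfl⟩

open ComplexConjugate

theorem mem_UD_iff {z : ℂ} : z ∈ UD ↔ ‖z‖ < 1 := mem_ball_zero_iff

theorem one_sub_sq_norm_pos {z : ℂ} (hz : z ∈ UD) : 0 < 1 - ‖z‖ ^ 2 := by
  have := mem_UD_iff.1 hz
  nlinarith [norm_nonneg z]

theorem sq_norm_one_sub_conj_mul (w z : ℂ) :
    ‖1 - conj w * z‖ ^ 2 = (1 - ‖z‖ ^ 2) * (1 - ‖w‖ ^ 2) + ‖z - w‖ ^ 2 := by
  simp only [Complex.sq_norm, Complex.normSq_apply, Complex.sub_re, Complex.sub_im,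
    Complex.mul_re, Complex.mul_im, Complex.conj_re, Complex.conj_im, Complex.one_re,
    Complex.one_im]
  ring

theorem one_sub_conj_mul_mem_slitPlane {w z : ℂ} (hw : w ∈ UD) (hz : z ∈ UD) :
    1 - conj w * z ∈ Complex.slitPlane := by
  rw [sub_eq_add_neg]
  refine Complex.mem_slitPlane_of_norm_lt_one ?_
  rw [norm_neg, norm_mul, Complex.norm_conj]
  have := mem_UD_iff.1 hw; have := mem_UD_iff.1 hz
  nlinarith [norm_nonneg w, norm_nonneg z]

def normalizedKernel (β : ℝ) (w z : ℂ) : ℂ :=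
  ((1 - ‖w‖ ^ 2) ^ β : ℝ) * (1 - conj w * z) ^ ((-2 * β : ℝ) : ℂ)

theorem differentiableOn_normalizedKernel (β : ℝ) {w : ℂ} (hw : w ∈ UD) :
    DifferentiableOn ℂ (normalizedKernel β w) UD := fun _ hz =>
  ((((differentiableAt_const _).sub (differentiableAt_const _ |>.mul differentiableAt_id)).cpow
    (differentiableAt_const _)
    (one_sub_conj_mul_mem_slitPlane hw hz)).const_mul _)
    |>.differentiableWithinAt

theorem norm_normalizedKernel (β : ℝ) {w : ℂ} (hw : w ∈ UD) (z : ℂ) :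
    ‖normalizedKernel β w z‖ = (1 - ‖w‖ ^ 2) ^ β / (‖1 - conj w * z‖ ^ 2) ^ β := by
  rw [normalizedKernel, norm_mul, Complex.norm_real, Real.norm_of_nonneg
    (Real.rpow_nonneg (one_sub_sq_norm_pos hw).le β), Complex.norm_cpow_real,
    show -2 * β = ((2 : ℕ) : ℝ) * -β by push_cast; ring, Real.rpow_mul (norm_nonneg _),
    Real.rpow_natCast, Real.rpow_neg (sq_nonneg _), div_eq_mul_inv]

theorem weighted_norm_normalizedKernel_le_one {β : ℝ} (hβ : 0 ≤ β) {w z : ℂ} (hw : w ∈ UD)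
    (hz : z ∈ UD) : (1 - ‖z‖ ^ 2) ^ β * ‖normalizedKernel β w z‖ ≤ 1 := by
  have hprod : 0 < (1 - ‖z‖ ^ 2) * (1 - ‖w‖ ^ 2) :=
    mul_pos (one_sub_sq_norm_pos hz) (one_sub_sq_norm_pos hw)
  have hle : (1 - ‖z‖ ^ 2) * (1 - ‖w‖ ^ 2) ≤ ‖1 - conj w * z‖ ^ 2 := by
    rw [sq_norm_one_sub_conj_mul]
    exact le_add_of_nonneg_right (sq_nonneg _)
  rw [norm_normalizedKernel β hw, mul_div_assoc', ← Real.mul_rpow (one_sub_sq_norm_pos hz).le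
    (one_sub_sq_norm_pos hw).le, div_le_one (Real.rpow_pos_of_pos (hprod.trans_le hle) β)]
  exact Real.rpow_le_rpow hprod.le hle hβ

theorem norm_normalizedKernel_self (β : ℝ) {w : ℂ} (hw : w ∈ UD) :
    ‖normalizedKernel β w w‖ = 1 / (1 - ‖w‖ ^ 2) ^ β := by
  have hB := one_sub_sq_norm_pos hw
  rw [norm_normalizedKernel β hw, sq_norm_one_sub_conj_mul, sub_self, norm_zero,
    zero_pow two_ne_zero, add_zero, Real.mul_rpow hB.le hB.le, div_mul_cancel_left₀
    (Real.rpow_pos_of_pos hB β).ne', one_div]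

section WeightedComposition

variable {β : ℝ} {u φ f : ℂ → ℂ} {z : ℂ}

theorem weighted_norm_mul_comp_le (hf : ∀ w ∈ UD, (1 - ‖w‖ ^ 2) ^ β * ‖f w‖ ≤ 1)
    (hz : z ∈ UD) (hφz : φ z ∈ UD) :
    (1 - ‖z‖ ^ 2) * ‖u z * f (φ z)‖ ≤ (1 - ‖z‖ ^ 2) * ‖u z‖ / (1 - ‖φ z‖ ^ 2) ^ β := by
  have hweight := Real.rpow_pos_of_pos (one_sub_sq_norm_pos hφz) β
  have hf_le : ‖f (φ z)‖ ≤ 1 / (1 - ‖φ z‖ ^ 2) ^ β := by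
    rw [le_div_iff₀ hweight, mul_comm]
    exact hf _ hφz
  rw [norm_mul, ← mul_assoc, ← mul_one_div]
  exact mul_le_mul_of_nonneg_left hf_le
    (mul_nonneg (one_sub_sq_norm_pos hz).le (norm_nonneg _))

theorem weighted_norm_mul_normalizedKernel_comp_self (hφz : φ z ∈ UD) :
    (1 - ‖z‖ ^ 2) * ‖u z * normalizedKernel β (φ z) (φ z)‖ =
      (1 - ‖z‖ ^ 2) * ‖u z‖ / (1 - ‖φ z‖ ^ 2) ^ β := by
  rw [norm_mul, norm_normalizedKernel_self β hφz, ← mul_assoc, mul_one_div]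

theorem ratio_le_of_forall_le (hβ : 0 ≤ β) {C : ℝ}
    (hC : ∀ f : ℂ → ℂ, DifferentiableOn ℂ f UD → (∀ w ∈ UD, (1 - ‖w‖ ^ 2) ^ β * ‖f w‖ ≤ 1) →
      ∀ z ∈ UD, (1 - ‖z‖ ^ 2) * ‖u z * f (φ z)‖ ≤ C)
    (hz : z ∈ UD) (hφz : φ z ∈ UD) : (1 - ‖z‖ ^ 2) * ‖u z‖ / (1 - ‖φ z‖ ^ 2) ^ β ≤ C := by
  rw [← weighted_norm_mul_normalizedKernel_comp_self hφz]
  exact hC _ (differentiableOn_normalizedKernel β hφz)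
    (fun _ hw => weighted_norm_normalizedKernel_le_one hβ hφz hw) z hz

end WeightedComposition

theorem stmt10_general (β : ℝ) (hβ : 0 < β) (u φ : ℂ → ℂ)
    (hφm : MapsTo φ UD UD) :
    ((∃ C : ℝ, ∀ f : ℂ → ℂ, DifferentiableOn ℂ f UD →
        (∀ z ∈ UD, (1 - ‖z‖ ^ 2) ^ β * ‖f z‖ ≤ 1) →
        ∀ z ∈ UD, (1 - ‖z‖ ^ 2) * ‖u z * f (φ z)‖ ≤ C) ↔
      (∃ M : ℝ, ∀ z ∈ UD, (1 - ‖z‖ ^ 2) * ‖u z‖ ≤ M * (1 - ‖φ z‖ ^ 2) ^ β)) ∧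
    ((∃ C : ℝ, ∀ f : ℂ → ℂ, DifferentiableOn ℂ f UD →
        (∀ z ∈ UD, (1 - ‖z‖ ^ 2) ^ β * ‖f z‖ ≤ 1) →
        ∀ z ∈ UD, (1 - ‖z‖ ^ 2) * ‖u z * f (φ z)‖ ≤ C) →
      (∃ z ∈ UD, u z ≠ 0) →
      sSup {y : ℝ | ∃ f : ℂ → ℂ, DifferentiableOn ℂ f UD ∧
          (∀ z ∈ UD, (1 - ‖z‖ ^ 2) ^ β * ‖f z‖ ≤ 1) ∧
          y = ⨆ z ∈ UD, (1 - ‖z‖ ^ 2) * ‖u z * f (φ z)‖} =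
        ⨆ z ∈ UD, (1 - ‖z‖ ^ 2) * ‖u z‖ / (1 - ‖φ z‖ ^ 2) ^ β) := by
  have weight_pos : ∀ z ∈ UD, 0 < (1 - ‖φ z‖ ^ 2) ^ β := fun z hz =>
    Real.rpow_pos_of_pos (one_sub_sq_norm_pos (hφm hz)) β
  refine ⟨⟨fun ⟨C, hC⟩ => ⟨C, fun z hz => ?_⟩, fun ⟨M, hM⟩ => ⟨M, fun f _ hf z hz => ?_⟩⟩,
    fun ⟨C, hC⟩ _ => ?_⟩
  · exact (div_le_iff₀ (weight_pos z hz)).1 (ratio_le_of_forall_le hβ.le hC hz (hφm hz))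
  · exact (weighted_norm_mul_comp_le hf hz (hφm hz)).trans
      ((div_le_iff₀ (weight_pos z hz)).2 (hM z hz))
  · have := Real.sSup_biSup_eq_biSup
      (T := {f | DifferentiableOn ℂ f UD ∧ ∀ z ∈ UD, (1 - ‖z‖ ^ 2) ^ β * ‖f z‖ ≤ 1})
      (h := fun f z => (1 - ‖z‖ ^ 2) * ‖u z * f (φ z)‖)
      (fun _ _ z hz => mul_nonneg (one_sub_sq_norm_pos hz).le (norm_nonneg _))
      (fun _ hf _ hz => weighted_norm_mul_comp_le hf.2 hz (hφm hz))
      (fun z hz => ⟨normalizedKernel β (φ z),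
        ⟨differentiableOn_normalizedKernel β (hφm hz),
          fun _ hw => weighted_norm_normalizedKernel_le_one hβ.le (hφm hz) hw⟩,
        (weighted_norm_mul_normalizedKernel_comp_self (hφm hz)).ge⟩)
      ⟨C, by rintro _ ⟨z, hz, rfl⟩; exact ratio_le_of_forall_le hβ.le hC hz (hφm hz)⟩
    simpa only [mem_ofPred_eq, and_assoc] using this

/-- `uC_φ : H^∞_{v_β} → H^∞_{v₁}` is bounded iff
`sup_{z∈D} (1-|z|^2)|u(z)|/(1-|φ(z)|^2)^β < ∞`, and (for `u` not identically zero)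
the operator norm equals this supremum. -/
theorem stmt10 (β : ℝ) (hβ : 0 < β) (u φ : ℂ → ℂ)
    (hu : DifferentiableOn ℂ u UD) (hφ : DifferentiableOn ℂ φ UD) (hφm : MapsTo φ UD UD) :
    ((∃ C : ℝ, ∀ f : ℂ → ℂ, DifferentiableOn ℂ f UD →
        (∀ z ∈ UD, (1 - ‖z‖ ^ 2) ^ β * ‖f z‖ ≤ 1) →
        ∀ z ∈ UD, (1 - ‖z‖ ^ 2) * ‖u z * f (φ z)‖ ≤ C) ↔
      (∃ M : ℝ, ∀ z ∈ UD, (1 - ‖z‖ ^ 2) * ‖u z‖ ≤ M * (1 - ‖φ z‖ ^ 2) ^ β)) ∧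
    ((∃ C : ℝ, ∀ f : ℂ → ℂ, DifferentiableOn ℂ f UD →
        (∀ z ∈ UD, (1 - ‖z‖ ^ 2) ^ β * ‖f z‖ ≤ 1) →
        ∀ z ∈ UD, (1 - ‖z‖ ^ 2) * ‖u z * f (φ z)‖ ≤ C) →
      (∃ z ∈ UD, u z ≠ 0) →
      sSup {y : ℝ | ∃ f : ℂ → ℂ, DifferentiableOn ℂ f UD ∧
          (∀ z ∈ UD, (1 - ‖z‖ ^ 2) ^ β * ‖f z‖ ≤ 1) ∧
          y = ⨆ z ∈ UD, (1 - ‖z‖ ^ 2) * ‖u z * f (φ z)‖} =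
        ⨆ z ∈ UD, (1 - ‖z‖ ^ 2) * ‖u z‖ / (1 - ‖φ z‖ ^ 2) ^ β) :=
  stmt10_general β hβ u φ hφm
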